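/- Fix r ≥ 1 and m ≥ 1 and work inside G(r,2m). Let G(r,2m−1) = {g ∈ G(r,2m) : |g|(2m) = 2m and z_{2m}(g) = 0} and G(r,2m−2) = {g ∈ G(r,2m) : |g|(j) = j and z_j(g) = 0 for j ∈ {2m−1,2m}}. Let I⁰_{2m} = {v ∈ I(r,2m) : |v| is fixed-point-free} and I⁰_{2m−2} = {v ∈ I(r,2m) : |v|(j) = j and z_j(v) = 0 for j ∈ {2m−1,2m}, and |v|(j) ≠ j for all j ≤ 2m−2}. Then for every g ∈ G(r,2m−1): r^{2m−2}·(2m−2)! · Σ_{v ∈ I⁰_{2m}, |g|v|g|⁻¹ = v} ζ_r^{⟨g,v⟩} = Σ_{x ∈ G(r,2m−1) with x⁻¹gx ∈ G(r,2m−2)} Σ_{w ∈ I⁰_{2m−2}, |x⁻¹gx| w |x⁻¹gx|⁻¹ = w} ζ_r^{⟨x⁻¹gx, w⟩}. (This identity of class functions says that the character of the restriction to G(r,2m−1) of the representation φ of G(r,2m) on the span of {C_v : v ∈ I⁰_{2m}} equals the induced character from the representation φ of G(r,2m−2) on the span of {C_w : w ∈ I⁰_{2m−2}}.) -/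

import Mathlib

noncomputable section

/-- The wreath product `G(r,n) = C_r ≀ S_n`, realized as pairs of a color vector
`z : Fin n → ZMod r` and a permutation `p` of `Fin n`. -/
@[ext] structure WreathG (r n : ℕ) where
  z : Fin n → ZMod r
  p : Equiv.Perm (Fin n)

namespace WreathG

variable {r n : ℕ}

instance : One (WreathG r n) := ⟨⟨0, 1⟩⟩
instance : Mul (WreathG r n) := ⟨fun g h => ⟨g.z + h.z ∘ g.p.symm, g.p * h.p⟩⟩
instance : Inv (WreathG r n) := ⟨fun g => ⟨-(g.z ∘ g.p), g.p⁻¹⟩⟩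

@[simp] theorem one_z : (1 : WreathG r n).z = 0 := rfl
@[simp] theorem one_p : (1 : WreathG r n).p = 1 := rfl
@[simp] theorem mul_z (a b : WreathG r n) : (a * b).z = a.z + b.z ∘ a.p.symm := rfl
@[simp] theorem mul_p (a b : WreathG r n) : (a * b).p = a.p * b.p := rfl
@[simp] theorem inv_z (a : WreathG r n) : (a⁻¹).z = -(a.z ∘ a.p) := rfl
@[simp] theorem inv_p (a : WreathG r n) : (a⁻¹).p = a.p⁻¹ := rfl

instance : Group (WreathG r n) :=
  Group.ofLeftAxioms
    (fun a b c => by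
      refine WreathG.ext ?_ (mul_assoc a.p b.p c.p)
      funext x
      show (a.z x + b.z (a.p.symm x)) + c.z ((a.p * b.p).symm x)
          = a.z x + (b.z (a.p.symm x) + c.z (b.p.symm (a.p.symm x)))
      have h : (a.p * b.p).symm x = b.p.symm (a.p.symm x) := rfl
      rw [h, add_assoc])
    (fun a => by
      refine WreathG.ext ?_ (one_mul a.p)
      funext x
      show 0 + a.z ((1 : Equiv.Perm (Fin n)).symm x) = a.z x
      simp only [zero_add]
      rfl)
    (fun a => by
      refine WreathG.ext ?_ (inv_mul_cancel a.p)
      funext x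
      show -(a.z (a.p x)) + a.z ((a.p⁻¹).symm x) = 0
      have h : (a.p⁻¹).symm x = a.p x := rfl
      rw [h, neg_add_cancel])

/-- An absolute involution of `G(r,n)`: `|v|² = 1` and `z ∘ |v| = z`. -/
def IsAbsInv (v : WreathG r n) : Prop := v.p ^ 2 = 1 ∧ v.z ∘ v.p = v.z

instance (v : WreathG r n) : Decidable (IsAbsInv v) :=
  inferInstanceAs (Decidable (_ ∧ _))

/-- Absolute conjugation `τ·(z,σ)·τ⁻¹ = (z ∘ τ⁻¹, τστ⁻¹)`. -/
def aconj (τ : Equiv.Perm (Fin n)) (v : WreathG r n) : WreathG r n :=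
  ⟨v.z ∘ τ.symm, τ * v.p * τ⁻¹⟩

theorem IsAbsInv.aconj {v : WreathG r n} (h : IsAbsInv v) (τ : Equiv.Perm (Fin n)) :
    IsAbsInv (WreathG.aconj τ v) := by
  obtain ⟨h1, h2⟩ := h
  constructor
  · show (τ * v.p * τ⁻¹) ^ 2 = 1
    have key : (τ * v.p * τ⁻¹) * (τ * v.p * τ⁻¹) = τ * (v.p * v.p) * τ⁻¹ := by
      simp [mul_assoc]
    rw [sq, key, ← sq, h1, mul_one, mul_inv_cancel]
  · funext x
    have := congrFun h2 (τ.symm x)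
    simpa [WreathG.aconj, Function.comp] using this

/-- `⟨g,v⟩ = ∑ i z_i(g)·z_i(v) ∈ ZMod r`. -/
def pairing (g v : WreathG r n) : ZMod r := ∑ i, g.z i * v.z i

/-- `inv_v(g)`: the number of pairs `i < j` with `|v|(i) = j` and `|g|(i) > |g|(j)`. -/
def invv (v g : WreathG r n) : ℕ :=
  Nat.card {q : Fin n × Fin n // q.1 < q.2 ∧ v.p q.1 = q.2 ∧ g.p q.2 < g.p q.1}

/-- The number of inversions of a permutation. -/
def invPerm (σ : Equiv.Perm (Fin n)) : ℕ :=
  Nat.card {q : Fin n × Fin n // q.1 < q.2 ∧ σ q.2 < σ q.1}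

/-- `fix_i(v)`: the number of `j` with `|v|(j) = j` and `z_j(v) = i`. -/
def fixc (v : WreathG r n) (i : ZMod r) : ℕ :=
  Nat.card {j : Fin n // v.p j = j ∧ v.z j = i}

/-- `pair_i(v)`: the number of pairs `j < k` with `|v|(j) = k` and `z_j(v) = z_k(v) = i`. -/
def pairc (v : WreathG r n) (i : ZMod r) : ℕ :=
  Nat.card {q : Fin n × Fin n // q.1 < q.2 ∧ v.p q.1 = q.2 ∧ v.z q.1 = i ∧ v.z q.2 = i}

instance : DecidableEq (WreathG r n) := fun a b =>
  decidable_of_iff (a.z = b.z ∧ a.p = b.p)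
    (by constructor
        · rintro ⟨h1, h2⟩; exact WreathG.ext h1 h2
        · rintro rfl; exact ⟨rfl, rfl⟩)

instance [NeZero r] : Fintype (WreathG r n) :=
  Fintype.ofEquiv ((Fin n → ZMod r) × Equiv.Perm (Fin n))
    { toFun := fun x => ⟨x.1, x.2⟩
      invFun := fun g => (g.z, g.p)
      left_inv := fun _ => rfl
      right_inv := fun _ => rfl }

end WreathG

/-- The set `I(r,n)` of absolute involutions, as a subtype. -/
abbrev AbsInv (r n : ℕ) := {v : WreathG r n // WreathG.IsAbsInv v}

/-- The model space `M`: the complex vector space with basis `{C_v : v ∈ I(r,n)}`. -/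
abbrev ModelSpace (r n : ℕ) := AbsInv r n →₀ ℂ

/-- `ζ_r = exp(2πi/r)`. -/
def zetaC (r : ℕ) : ℂ := Complex.exp (2 * Real.pi * Complex.I / r)

/-- `ζ_r` raised to an exponent in `ZMod r` (well defined since `ζ_r^r = 1`). -/
def zetaPow (r : ℕ) (a : ZMod r) : ℂ := zetaC r ^ a.val

/-- The Gelfand model operator `ϱ(g) C_v = ζ_r^{⟨g,v⟩} (−1)^{inv_v(g)} C_{|g|v|g|⁻¹}`. -/
def modelRho {r n : ℕ} (g : WreathG r n) :
    ModelSpace r n →ₗ[ℂ] ModelSpace r n :=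
  Finsupp.lsum ℂ fun v =>
    ((zetaPow r (WreathG.pairing g v.1) * (-1 : ℂ) ^ WreathG.invv v.1 g) •
      Finsupp.lsingle (⟨WreathG.aconj g.p v.1, v.2.aconj g.p⟩ : AbsInv r n))

/-- The auxiliary operator `φ(g) C_v = ζ_r^{⟨g,v⟩} C_{|g|v|g|⁻¹}`. -/
def modelPhi {r n : ℕ} (g : WreathG r n) :
    ModelSpace r n →ₗ[ℂ] ModelSpace r n :=
  Finsupp.lsum ℂ fun v =>
    ((zetaPow r (WreathG.pairing g v.1)) •
      Finsupp.lsingle (⟨WreathG.aconj g.p v.1, v.2.aconj g.p⟩ : AbsInv r n))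

/-!
Write `e = 2m - 1` and `d = 2m - 2` for the last two points. On the left, recoloring the 2-cycle
of `|v|` through `e` with `c ∈ ZMod r` shifts `⟨g,v⟩` by `c · z_{|v|(e)}(g)` (as `z_e(g) = 0`), so
summing over `c` kills every `v` with `z_{|v|(e)}(g) ≠ 0` and leaves `r` times the sum over the
`v` with `z_e(v) = 0`. On the right, `(x, w) ↦ (|x| (|w| (d e)) |x|⁻¹, x)` (keeping the colors of
`w`) is a bijection from the index pairs of the double sum onto the pairs `(v, x)` of such a
normalized `v` and an `x ∈ G(r,2m-1)` with `|x|(d) = |v|(e)`. It carries `⟨x⁻¹gx, w⟩` to `⟨g,v⟩`,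
and each `v` has `r^(2m-1) (2m-2)!` partners `x`.
-/

open Finset Equiv

section Permutations

variable {α : Type*} [DecidableEq α]

lemma commute_swap_of_swap_apply_eq {σ : Perm α} {d e : α}
    (h : swap (σ d) (σ e) = swap d e) : Commute σ (swap d e) :=
  mul_inv_eq_iff_eq_mul.mp ((swap_apply_apply σ d e).symm.trans h)

variable [Fintype α]

lemma card_perm_apply_eq_self_and_apply_eq {d e a : α} (hde : d ≠ e) (hae : a ≠ e) :
    Fintype.card {σ : Perm α // σ e = e ∧ σ d = a} = (Fintype.card α - 2).factorial := by
  have fixBoth : {σ : Perm α // σ e = e ∧ σ d = a} ≃ {σ : Perm α // σ e = e ∧ σ d = d} :=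
    (Equiv.mulLeft (swap a d)).subtypeEquiv fun σ => by
      simp only [coe_mulLeft, Perm.mul_apply, swap_apply_eq_iff, swap_apply_right,
        swap_apply_of_ne_of_ne hae.symm hde.symm]
  have supp : {σ : Perm α // σ e = e ∧ σ d = d} ≃
      {σ : Perm α // ∀ j, ¬ j ∉ ({d, e} : Finset α) → σ j = j} :=
    subtypeEquivRight fun σ => by
      simp only [not_not, mem_insert, mem_singleton, or_imp, forall_and, forall_eq, and_comm]
  rw [Fintype.card_congr ((fixBoth.trans supp).trans (Perm.subtypeEquivSubtypePerm _).symm),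
    Fintype.card_perm, Fintype.card_subtype_compl, Fintype.card_coe, card_pair hde]

lemma card_fun_apply_eq_zero {M : Type*} [Fintype M] [DecidableEq M] [Zero M] (e : α) :
    Fintype.card {z : α → M // z e = 0} = Fintype.card M ^ (Fintype.card α - 1) := by
  have split : {z : α → M // z e = 0} ≃ {c : M // c = 0} × ({j // j ≠ e} → M) :=
    ((funSplitAt e M).subtypeEquiv (q := fun s => s.1 = 0) fun _ => Iff.rfl).trans
      (prodSubtypeFstEquivSubtypeProd (p := fun c : M => c = 0))
  rw [Fintype.card_congr split, Fintype.card_prod, Fintype.card_subtype_eq,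
    Fintype.card_fun, Fintype.card_subtype_compl, Fintype.card_subtype_eq, one_mul]

end Permutations

section Zeta

variable {r : ℕ} [NeZero r]

lemma zetaPow_eq_stdAddChar (a : ZMod r) : zetaPow r a = ZMod.stdAddChar a := by
  rw [ZMod.stdAddChar_apply, ZMod.toCircle_apply, zetaPow, zetaC, ← Complex.exp_nat_mul]
  ring_nf

lemma sum_zetaPow_add_mul (a b : ZMod r) :
    ∑ c, zetaPow r (a + b * c) = if b = 0 then r * zetaPow r a else 0 := by
  simp only [zetaPow_eq_stdAddChar, AddChar.map_add_eq_mul, ← mul_sum, mul_comm b,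
    AddChar.sum_mulShift _ (ZMod.isPrimitive_stdAddChar r), ZMod.card]
  split_ifs <;> ring

end Zeta

namespace WreathG

variable {r n : ℕ}

@[simp] lemma aconj_z (σ : Perm (Fin n)) (v : WreathG r n) : (aconj σ v).z = v.z ∘ σ.symm := rfl
@[simp] lemma aconj_p (σ : Perm (Fin n)) (v : WreathG r n) : (aconj σ v).p = σ * v.p * σ⁻¹ := rfl

lemma aconj_one (v : WreathG r n) : aconj 1 v = v :=
  WreathG.ext rfl (by simp)

lemma aconj_mul (σ τ : Perm (Fin n)) (v : WreathG r n) :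
    aconj (σ * τ) v = aconj σ (aconj τ v) :=
  WreathG.ext rfl (by simp [mul_assoc])

lemma aconj_inv_aconj (σ : Perm (Fin n)) (v : WreathG r n) : aconj σ⁻¹ (aconj σ v) = v := by
  rw [← aconj_mul, inv_mul_cancel, aconj_one]

lemma aconj_aconj_inv (σ : Perm (Fin n)) (v : WreathG r n) : aconj σ (aconj σ⁻¹ v) = v := by
  simpa using aconj_inv_aconj σ⁻¹ v

lemma aconj_injective (σ : Perm (Fin n)) : Function.Injective (aconj (r := r) σ) :=
  Function.LeftInverse.injective (aconj_inv_aconj σ)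

lemma aconj_conj_eq_self_iff (σ τ : Perm (Fin n)) (v : WreathG r n) :
    aconj (τ⁻¹ * σ * τ) v = v ↔ aconj σ (aconj τ v) = aconj τ v := by
  rw [← (aconj_injective τ).eq_iff]
  simp only [← aconj_mul, mul_assoc, mul_inv_cancel_left]

lemma aconj_inv_eq_self {σ : Perm (Fin n)} {v : WreathG r n} (h : aconj σ v = v) :
    aconj σ⁻¹ v = v := by
  conv_lhs => rw [← h]
  exact aconj_inv_aconj σ v

lemma aconj_p_ne_self {v : WreathG r n} (hv : ∀ j, v.p j ≠ j) (σ : Perm (Fin n)) (j : Fin n) :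
    (aconj σ v).p j ≠ j := fun h => hv (σ⁻¹ j) (Perm.eq_inv_iff_eq.mpr h)

lemma IsAbsInv.p_involutive {v : WreathG r n} (hv : IsAbsInv v) : Function.Involutive v.p :=
  fun j => by rw [← Perm.mul_apply, ← sq, hv.1, Perm.one_apply]

lemma IsAbsInv.z_p {v : WreathG r n} (hv : IsAbsInv v) (j : Fin n) : v.z (v.p j) = v.z j :=
  congrFun hv.2 j

lemma commute_of_aconj_eq_self {σ : Perm (Fin n)} {v : WreathG r n} (h : aconj σ v = v) :
    Commute σ v.p :=
  mul_inv_eq_iff_eq_mul.mp (congrArg WreathG.p h)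

lemma pairing_mul (a b w : WreathG r n) :
    pairing (a * b) w = pairing a w + pairing b (aconj a.p⁻¹ w) := by
  simp only [pairing, mul_z, Pi.add_apply, Function.comp_apply, add_mul, sum_add_distrib,
    aconj_z]
  congr 1
  rw [← Equiv.sum_comp a.p]
  simp only [symm_apply_apply]
  rfl

lemma pairing_one (w : WreathG r n) : pairing 1 w = 0 := by
  simp [pairing]

lemma pairing_inv (a w : WreathG r n) : pairing a⁻¹ w = -pairing a (aconj a.p w) := by
  have h := pairing_mul a⁻¹ a w
  rw [inv_mul_cancel, pairing_one, inv_p, inv_inv] at h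
  exact eq_neg_of_add_eq_zero_left h.symm

lemma pairing_conj {x g w : WreathG r n} (hw : aconj (x⁻¹ * g * x).p w = w) :
    pairing (x⁻¹ * g * x) w = pairing g (aconj x.p w) := by
  have hx : aconj (g.p⁻¹ * x.p) w = aconj x.p w := by
    have : g.p⁻¹ * x.p = x.p * (x⁻¹ * g * x).p⁻¹ := by simp [mul_assoc]
    rw [this, aconj_mul, aconj_inv_eq_self hw]
  rw [pairing_mul, pairing_mul, pairing_inv]
  simp only [mul_p, inv_p, inv_inv, mul_inv_rev, hx]
  abel

/-- For the last point `e`, the paper's `G(r,n-1)` is `{g | TrivialAt g e}`. -/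
def TrivialAt (g : WreathG r n) (j : Fin n) : Prop := g.p j = j ∧ g.z j = 0

instance (g : WreathG r n) (j : Fin n) : Decidable (TrivialAt g j) :=
  inferInstanceAs (Decidable (_ ∧ _))

lemma trivialAt_conj_iff (x g : WreathG r n) (j : Fin n) :
    TrivialAt (x⁻¹ * g * x) j ↔ TrivialAt g (x.p j) := by
  have hp : (x⁻¹ * g * x).p j = j ↔ g.p (x.p j) = x.p j := symm_apply_eq _
  rw [TrivialAt, TrivialAt, hp]
  refine and_congr_right fun hfix => ?_
  have hz : (x⁻¹ * g * x).z j = -x.z (x.p j) + g.z (x.p j) + x.z (g.p.symm (x.p j)) := rfl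
  rw [hz, (symm_apply_eq _).mpr hfix.symm, neg_add_cancel_comm]

lemma TrivialAt.commute_swap {g : WreathG r n} {d e : Fin n} (hd : TrivialAt g d)
    (he : TrivialAt g e) : Commute g.p (swap d e) :=
  commute_swap_of_swap_apply_eq (by rw [hd.1, he.1])

/-- Multiplying `|u|` by the transposition `(d e)`: it joins the fixed points `d, e` of `|u|`
into a 2-cycle, and splits a 2-cycle `(d e)` of `|u|` into fixed points. -/
def lift (u : WreathG r n) (d e : Fin n) : WreathG r n := ⟨u.z, u.p * swap d e⟩

@[simp] lemma lift_z (u : WreathG r n) (d e : Fin n) : (lift u d e).z = u.z := rfl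
@[simp] lemma lift_p (u : WreathG r n) (d e : Fin n) : (lift u d e).p = u.p * swap d e := rfl

lemma lift_lift (u : WreathG r n) (d e : Fin n) : lift (lift u d e) d e = u :=
  WreathG.ext rfl (by simp [mul_assoc])

lemma aconj_lift {σ : Perm (Fin n)} {d e : Fin n} (h : Commute σ (swap d e))
    (u : WreathG r n) : aconj σ (lift u d e) = lift (aconj σ u) d e := by
  refine WreathG.ext rfl ?_
  simp only [aconj_p, lift_p]
  rw [mul_assoc, mul_assoc, ← h.inv_left.eq]
  simp only [mul_assoc]

lemma IsAbsInv.lift {u : WreathG r n} (hu : IsAbsInv u) {d e : Fin n}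
    (hc : Commute u.p (swap d e)) (hz : u.z d = u.z e) : IsAbsInv (lift u d e) := by
  refine ⟨?_, ?_⟩
  · rw [lift_p, hc.mul_pow, hu.1, one_mul, sq, swap_mul_self]
  · funext j
    simp only [Function.comp_apply, lift_z, lift_p, Perm.mul_apply, hu.z_p]
    rcases eq_or_ne j d with rfl | hjd
    · simp [hz]
    rcases eq_or_ne j e with rfl | hje
    · simp [hz]
    · rw [swap_apply_of_ne_of_ne hjd hje]

lemma lift_p_ne_self {u : WreathG r n} {d e : Fin n} (hde : d ≠ e) (hd : u.p d = d)
    (he : u.p e = e) (hu : ∀ j, j ≠ d → j ≠ e → u.p j ≠ j) (j : Fin n) :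
    (lift u d e).p j ≠ j := by
  simp only [lift_p, Perm.mul_apply]
  rcases eq_or_ne j d with rfl | hjd
  · simpa [he] using hde.symm
  rcases eq_or_ne j e with rfl | hje
  · simpa [hd] using hde
  · rw [swap_apply_of_ne_of_ne hjd hje]
    exact hu j hjd hje

section Membership

variable {g x : WreathG r n} {d e : Fin n}

lemma aconj_lift_mem {w : WreathG r n} (hde : d ≠ e) (hg : TrivialAt g e) (hx : TrivialAt x e)
    (hhd : TrivialAt (x⁻¹ * g * x) d) (hw : IsAbsInv w) (hwd : TrivialAt w d)
    (hwe : TrivialAt w e) (hfpf : ∀ j, j ≠ d → j ≠ e → w.p j ≠ j)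
    (hfix : aconj (x⁻¹ * g * x).p w = w) :
    ((IsAbsInv (aconj x.p (lift w d e)) ∧ (∀ j, (aconj x.p (lift w d e)).p j ≠ j) ∧
        aconj g.p (aconj x.p (lift w d e)) = aconj x.p (lift w d e)) ∧
      (aconj x.p (lift w d e)).z e = 0 ∧ g.z ((aconj x.p (lift w d e)).p e) = 0) ∧
    TrivialAt x e ∧ x.p d = (aconj x.p (lift w d e)).p e := by
  have hxe : x.p⁻¹ e = e := Perm.inv_eq_iff_eq.mpr hx.1.symm
  have hhe : TrivialAt (x⁻¹ * g * x) e := (trivialAt_conj_iff x g e).mpr (by rwa [hx.1])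
  have hve : (aconj x.p (lift w d e)).p e = x.p d := by
    simp [Perm.mul_apply, hxe, hwd.1]
  refine ⟨⟨⟨(hw.lift (hwd.commute_swap hwe) (hwd.2.trans hwe.2.symm)).aconj x.p,
    aconj_p_ne_self (lift_p_ne_self hde hwd.1 hwe.1 hfpf) x.p, ?_⟩, ?_, ?_⟩, hx, hve.symm⟩
  · refine (aconj_conj_eq_self_iff g.p x.p _).mp ?_
    exact (aconj_lift (hhd.commute_swap hhe) w).trans (congrArg (lift · d e) hfix)
  · show w.z (x.p⁻¹ e) = 0
    rw [hxe, hwe.2]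
  · rw [hve]
    exact ((trivialAt_conj_iff x g d).mp hhd).2

lemma lift_aconj_inv_mem {v : WreathG r n} (hg : TrivialAt g e) (hv : IsAbsInv v)
    (hfpf : ∀ j, v.p j ≠ j) (hfix : aconj g.p v = v) (hve : v.z e = 0) (hgv : g.z (v.p e) = 0)
    (hx : TrivialAt x e) (hxd : x.p d = v.p e) :
    (TrivialAt x e ∧ TrivialAt (x⁻¹ * g * x) d ∧ TrivialAt (x⁻¹ * g * x) e) ∧
    IsAbsInv (lift (aconj x.p⁻¹ v) d e) ∧
      (TrivialAt (lift (aconj x.p⁻¹ v) d e) d ∧ TrivialAt (lift (aconj x.p⁻¹ v) d e) e) ∧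
      (∀ j, j ≠ d → j ≠ e → (lift (aconj x.p⁻¹ v) d e).p j ≠ j) ∧
      aconj (x⁻¹ * g * x).p (lift (aconj x.p⁻¹ v) d e) = lift (aconj x.p⁻¹ v) d e := by
  have hxe : x.p⁻¹ e = e := Perm.inv_eq_iff_eq.mpr hx.1.symm
  have hxd' : x.p⁻¹ (v.p e) = d := Perm.inv_eq_iff_eq.mpr hxd.symm
  have hgve : g.p (v.p e) = v.p e := by
    rw [← Perm.mul_apply, (commute_of_aconj_eq_self hfix).eq, Perm.mul_apply, hg.1]
  have hhd : TrivialAt (x⁻¹ * g * x) d :=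
    (trivialAt_conj_iff x g d).mpr (by rw [hxd]; exact ⟨hgve, hgv⟩)
  have hhe : TrivialAt (x⁻¹ * g * x) e := (trivialAt_conj_iff x g e).mpr (by rwa [hx.1])
  set u := aconj x.p⁻¹ v with hu
  have hud : u.p d = e := by simpa [u, Perm.mul_apply, hxd, hv.p_involutive e] using hxe
  have hue : u.p e = d := by simp [u, Perm.mul_apply, hx.1, hxd']
  have huz : u.z d = u.z e := by
    show v.z (x.p d) = v.z (x.p e)
    rw [hxd, hv.z_p, hx.1]
  have hued : u.z e = 0 := by
    show v.z (x.p e) = 0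
    rw [hx.1, hve]
  refine ⟨⟨hx, hhd, hhe⟩, (hv.aconj _).lift ?_ huz, ⟨⟨?_, huz.trans hued⟩, ⟨?_, hued⟩⟩, ?_, ?_⟩
  · exact commute_swap_of_swap_apply_eq (by rw [hud, hue, swap_comm])
  · simp [Perm.mul_apply, hue]
  · simp [Perm.mul_apply, hud]
  · intro j hjd hje
    rw [lift_p, Perm.mul_apply, swap_apply_of_ne_of_ne hjd hje]
    exact aconj_p_ne_self hfpf _ j
  · rw [aconj_lift (hhd.commute_swap hhe)]
    refine congrArg (lift · d e) ((aconj_conj_eq_self_iff g.p x.p u).mpr ?_)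
    rwa [hu, aconj_aconj_inv]

end Membership

def recolor (v : WreathG r n) (e : Fin n) (c : ZMod r) : WreathG r n :=
  ⟨fun i => if i = e ∨ i = v.p e then c else v.z i, v.p⟩

@[simp] lemma recolor_p (v : WreathG r n) (e : Fin n) (c : ZMod r) : (recolor v e c).p = v.p :=
  rfl

@[simp] lemma recolor_z_apply_self (v : WreathG r n) (e : Fin n) (c : ZMod r) :
    (recolor v e c).z e = c := by
  simp [recolor]

lemma recolor_recolor (v : WreathG r n) (e : Fin n) (c c' : ZMod r) :
    recolor (recolor v e c) e c' = recolor v e c' := by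
  ext i
  · simp only [recolor]
    split_ifs <;> rfl
  · rfl

lemma IsAbsInv.recolor_z_self {v : WreathG r n} (hv : IsAbsInv v) (e : Fin n) :
    recolor v e (v.z e) = v := by
  ext i
  · simp only [recolor]
    split_ifs with h
    · rcases h with rfl | rfl
      exacts [rfl, (hv.z_p _).symm]
    · rfl
  · rfl

lemma IsAbsInv.recolor {v : WreathG r n} (hv : IsAbsInv v) (e : Fin n) (c : ZMod r) :
    IsAbsInv (recolor v e c) := by
  refine ⟨hv.1, funext fun i => ?_⟩
  have horbit : (v.p i = e ∨ v.p i = v.p e) ↔ (i = e ∨ i = v.p e) := by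
    rw [hv.p_involutive.eq_iff, v.p.injective.eq_iff, or_comm]
  simp only [Function.comp_apply, WreathG.recolor, horbit, hv.z_p]

lemma aconj_recolor (σ : Perm (Fin n)) (v : WreathG r n) (e : Fin n) (c : ZMod r) :
    aconj σ (recolor v e c) = recolor (aconj σ v) (σ e) c := by
  ext i
  · simp [recolor, symm_apply_eq, Perm.mul_apply]
  · rfl

lemma pairing_recolor (g : WreathG r n) {v : WreathG r n} {e : Fin n} (hne : e ≠ v.p e)
    (c : ZMod r) :
    pairing g (recolor v e c) = pairing g (recolor v e 0) + (g.z e + g.z (v.p e)) * c := by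
  have h : ∀ i, g.z i * (recolor v e c).z i = g.z i * (recolor v e 0).z i +
      if i ∈ ({e, v.p e} : Finset (Fin n)) then g.z i * c else 0 := by
    intro i
    simp only [recolor, mem_insert, mem_singleton]
    split_ifs <;> ring
  simp only [pairing, h, sum_add_distrib, sum_ite_mem, univ_inter, sum_pair hne, add_mul]

section Sums

variable [NeZero r]

def fpfFixed (σ : Perm (Fin n)) : Finset (WreathG r n) :=
  univ.filter fun v => IsAbsInv v ∧ (∀ j, v.p j ≠ j) ∧ aconj σ v = v

@[simp] lemma mem_fpfFixed {σ : Perm (Fin n)} {v : WreathG r n} :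
    v ∈ fpfFixed σ ↔ IsAbsInv v ∧ (∀ j, v.p j ≠ j) ∧ aconj σ v = v := by
  simp [fpfFixed]

lemma sum_sum_conj_eq_sum_fiber (g : WreathG r n) {d e : Fin n} (hde : d ≠ e)
    (hg : TrivialAt g e) :
    ∑ x ∈ univ.filter (fun x : WreathG r n =>
        TrivialAt x e ∧ TrivialAt (x⁻¹ * g * x) d ∧ TrivialAt (x⁻¹ * g * x) e),
      ∑ w ∈ univ.filter (fun w : WreathG r n => IsAbsInv w ∧ (TrivialAt w d ∧ TrivialAt w e) ∧
          (∀ j, j ≠ d → j ≠ e → w.p j ≠ j) ∧ aconj (x⁻¹ * g * x).p w = w),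
        zetaPow r (pairing (x⁻¹ * g * x) w)
    = ∑ v ∈ (fpfFixed g.p).filter (fun v => v.z e = 0 ∧ g.z (v.p e) = 0),
      ∑ _x ∈ univ.filter (fun x : WreathG r n => TrivialAt x e ∧ x.p d = v.p e),
        zetaPow r (pairing g v) := by
  rw [sum_sigma', sum_sigma']
  refine sum_nbij' (fun p => ⟨aconj p.1.p (lift p.2 d e), p.1⟩)
    (fun q => ⟨q.2, lift (aconj q.2.p⁻¹ q.1) d e⟩) ?_ ?_ ?_ ?_ ?_
  · rintro ⟨x, w⟩ hp
    simp only [mem_sigma, mem_filter, mem_fpfFixed, mem_univ, true_and] at hp ⊢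
    obtain ⟨⟨hx, hhd, -⟩, hw, ⟨hwd, hwe⟩, hfpf, hfix⟩ := hp
    exact aconj_lift_mem hde hg hx hhd hw hwd hwe hfpf hfix
  · rintro ⟨v, x⟩ hq
    simp only [mem_sigma, mem_filter, mem_fpfFixed, mem_univ, true_and] at hq ⊢
    obtain ⟨⟨⟨hv, hfpf, hfix⟩, hve, hgv⟩, hx, hxd⟩ := hq
    exact lift_aconj_inv_mem hg hv hfpf hfix hve hgv hx hxd
  · rintro ⟨x, w⟩ -
    simp [aconj_inv_aconj, lift_lift]
  · rintro ⟨v, x⟩ -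
    simp [aconj_aconj_inv, lift_lift]
  · rintro ⟨x, w⟩ hp
    simp only [mem_sigma, mem_filter, mem_univ, true_and] at hp
    exact congrArg (zetaPow r) (pairing_conj hp.2.2.2.2)

lemma card_trivialAt_apply_eq {d e a : Fin n} (hde : d ≠ e) (hae : a ≠ e) :
    #(univ.filter fun x : WreathG r n => TrivialAt x e ∧ x.p d = a) =
      r ^ (n - 1) * (n - 2).factorial := by
  have split : {x : WreathG r n // TrivialAt x e ∧ x.p d = a} ≃
      {z : Fin n → ZMod r // z e = 0} × {σ : Perm (Fin n) // σ e = e ∧ σ d = a} :=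
    { toFun x := (⟨x.1.z, x.2.1.2⟩, ⟨x.1.p, x.2.1.1, x.2.2⟩)
      invFun y := ⟨⟨y.1.1, y.2.1⟩, ⟨y.2.2.1, y.1.2⟩, y.2.2.2⟩
      left_inv _ := rfl
      right_inv _ := rfl }
  rw [← Fintype.card_subtype, Fintype.card_congr split, Fintype.card_prod,
    card_fun_apply_eq_zero, card_perm_apply_eq_self_and_apply_eq hde hae, ZMod.card,
    Fintype.card_fin]

lemma sum_fpfFixed_eq_sum_recolor {M : Type*} [AddCommMonoid M] {σ : Perm (Fin n)} {e : Fin n}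
    (he : σ e = e) (f : WreathG r n → M) :
    ∑ v ∈ fpfFixed σ, f v =
      ∑ p ∈ (fpfFixed σ).filter (fun v => v.z e = 0) ×ˢ (univ : Finset (ZMod r)),
        f (recolor p.1 e p.2) := by
  have recolor_mem : ∀ v : WreathG r n, v ∈ fpfFixed σ → ∀ c, recolor v e c ∈ fpfFixed σ := by
    intro v hv c
    rw [mem_fpfFixed] at hv ⊢
    refine ⟨hv.1.recolor e c, hv.2.1, ?_⟩
    rw [aconj_recolor, hv.2.2, he]
  have recolor_back : ∀ v : WreathG r n, v ∈ fpfFixed σ →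
      recolor (recolor v e 0) e (v.z e) = v := fun v hv =>
    (recolor_recolor v e 0 (v.z e)).trans ((mem_fpfFixed.mp hv).1.recolor_z_self e)
  refine sum_nbij' (fun v => (recolor v e 0, v.z e)) (fun p => recolor p.1 e p.2) ?_ ?_
    recolor_back ?_ ?_
  · intro v hv
    simp only [mem_product, mem_filter, mem_univ, and_true]
    exact ⟨recolor_mem v hv 0, recolor_z_apply_self v e 0⟩
  · intro p hp
    exact recolor_mem p.1 (mem_filter.mp (mem_product.mp hp).1).1 p.2
  · rintro ⟨v, c⟩ hp
    obtain ⟨hv, hz⟩ := mem_filter.mp (mem_product.mp hp).1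
    rw [recolor_recolor, recolor_z_apply_self, ← hz, (mem_fpfFixed.mp hv).1.recolor_z_self]
  · intro v hv
    rw [recolor_back v hv]

lemma sum_fpfFixed_eq_mul_sum (g : WreathG r n) {e : Fin n} (hg : TrivialAt g e) :
    ∑ v ∈ fpfFixed g.p, zetaPow r (pairing g v) =
      r * ∑ v ∈ (fpfFixed g.p).filter (fun v => v.z e = 0 ∧ g.z (v.p e) = 0),
        zetaPow r (pairing g v) := by
  calc ∑ v ∈ fpfFixed g.p, zetaPow r (pairing g v)
      = ∑ v ∈ (fpfFixed g.p).filter (fun v => v.z e = 0),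
          ∑ c, zetaPow r (pairing g (recolor v e c)) := by
        rw [sum_fpfFixed_eq_sum_recolor hg.1, sum_product]
    _ = ∑ v ∈ (fpfFixed g.p).filter (fun v => v.z e = 0),
          ∑ c, zetaPow r (pairing g v + g.z (v.p e) * c) := by
        refine sum_congr rfl fun v hv => sum_congr rfl fun c _ => ?_
        obtain ⟨hv, hz⟩ := mem_filter.mp hv
        have hv' := mem_fpfFixed.mp hv
        have hne : e ≠ v.p e := fun h => hv'.2.1 e h.symm
        rw [pairing_recolor g hne, ← hz, hv'.1.recolor_z_self, hg.2, zero_add]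
    _ = ∑ v ∈ (fpfFixed g.p).filter (fun v => v.z e = 0),
          if g.z (v.p e) = 0 then r * zetaPow r (pairing g v) else 0 := by
        simp only [sum_zetaPow_add_mul]
    _ = _ := by
        rw [← sum_filter, mul_sum, filter_filter]

lemma sum_sum_conj_eq_mul_sum (g : WreathG r n) {d e : Fin n} (hde : d ≠ e) (hg : TrivialAt g e) :
    ∑ x ∈ univ.filter (fun x : WreathG r n =>
        TrivialAt x e ∧ TrivialAt (x⁻¹ * g * x) d ∧ TrivialAt (x⁻¹ * g * x) e),
      ∑ w ∈ univ.filter (fun w : WreathG r n => IsAbsInv w ∧ (TrivialAt w d ∧ TrivialAt w e) ∧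
          (∀ j, j ≠ d → j ≠ e → w.p j ≠ j) ∧ aconj (x⁻¹ * g * x).p w = w),
        zetaPow r (pairing (x⁻¹ * g * x) w)
    = (r ^ (n - 1) * (n - 2).factorial : ℂ) *
        ∑ v ∈ (fpfFixed g.p).filter (fun v => v.z e = 0 ∧ g.z (v.p e) = 0),
          zetaPow r (pairing g v) := by
  rw [sum_sum_conj_eq_sum_fiber g hde hg, mul_sum]
  refine sum_congr rfl fun v hv => ?_
  have hve : v.p e ≠ e := (mem_fpfFixed.mp (mem_filter.mp hv).1).2.1 e
  rw [sum_const, card_trivialAt_apply_eq hde hve, nsmul_eq_mul]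
  push_cast
  rfl

lemma sum_filter_isAbsInv_and (P : WreathG r n → Prop) [DecidablePred P]
    (f : WreathG r n → ℂ) :
    ∑ v ∈ univ.filter (fun v => IsAbsInv v ∧ P v), f v =
      ∑ v ∈ univ.filter (fun v : AbsInv r n => P v.1), f v.1 := by
  refine Eq.trans ?_ (sum_map _ (Function.Embedding.subtype _) f)
  congr 1
  ext v
  simp [and_comm]

end Sums

end WreathG

/-- For `g ∈ G(r,2m−1)`, the character at `g` of the restriction to
`G(r,2m−1)` of the representation `φ` of `G(r,2m)` on the span of the `C_v` with `v` a
fixed-point-free absolute involution equals the character at `g` induced from the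
representation `φ` of `G(r,2m−2)` on the span of the `C_w` with `w` a fixed-point-free
absolute involution of `G(r,2m−2)`. -/
theorem restriction_char_eq_induced_char (r m : ℕ) [NeZero r] (hm : 1 ≤ m)
    (g : WreathG r (2 * m))
    (hgp : g.p ⟨2 * m - 1, by omega⟩ = ⟨2 * m - 1, by omega⟩)
    (hgz : g.z ⟨2 * m - 1, by omega⟩ = 0) :
    ((r : ℂ) ^ (2 * m - 2) * (Nat.factorial (2 * m - 2) : ℂ)) *
      ∑ v ∈ Finset.univ.filter (fun v : AbsInv r (2 * m) =>
          (∀ j, v.1.p j ≠ j) ∧ WreathG.aconj g.p v.1 = v.1),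
        zetaPow r (WreathG.pairing g v.1)
    = ∑ x ∈ Finset.univ.filter (fun x : WreathG r (2 * m) =>
          (x.p ⟨2 * m - 1, by omega⟩ = ⟨2 * m - 1, by omega⟩ ∧
            x.z ⟨2 * m - 1, by omega⟩ = 0) ∧
          (∀ j : Fin (2 * m), 2 * m - 2 ≤ j.val →
            ((x⁻¹ * g * x).p j = j ∧ (x⁻¹ * g * x).z j = 0))),
        ∑ w ∈ Finset.univ.filter (fun w : AbsInv r (2 * m) =>
            (∀ j : Fin (2 * m), 2 * m - 2 ≤ j.val → (w.1.p j = j ∧ w.1.z j = 0)) ∧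
            (∀ j : Fin (2 * m), j.val < 2 * m - 2 → w.1.p j ≠ j) ∧
            WreathG.aconj (x⁻¹ * g * x).p w.1 = w.1),
          zetaPow r (WreathG.pairing (x⁻¹ * g * x) w.1) := by
  set d : Fin (2 * m) := ⟨2 * m - 2, by omega⟩
  set e : Fin (2 * m) := ⟨2 * m - 1, by omega⟩
  have hde : d ≠ e := Fin.ne_of_val_ne (show 2 * m - 2 ≠ 2 * m - 1 by omega)
  have htop : ∀ j : Fin (2 * m), 2 * m - 2 ≤ j.val ↔ j = d ∨ j = e := by
    intro j; simp only [d, e, Fin.ext_iff]; omega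
  have hL := WreathG.sum_fpfFixed_eq_mul_sum g (e := e) ⟨hgp, hgz⟩
  have hR := WreathG.sum_sum_conj_eq_mul_sum g hde ⟨hgp, hgz⟩
  simp only [WreathG.fpfFixed, filter_filter, and_assoc, WreathG.sum_filter_isAbsInv_and] at hL hR
  -- the coordinates `≥ 2m - 2` are exactly `d` and `e`
  simp only [← WreathG.TrivialAt.eq_1, ← not_le, htop, not_or, or_imp, forall_and, forall_eq,
    and_imp, ← ne_eq, and_assoc]
  rw [hL, hR, show 2 * m - 1 = 2 * m - 2 + 1 by omega, pow_succ]
  ring
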